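/- arXiv:2602.09283 — 5 statements merged into one kernel-verified Lean document; each statement's English description precedes it below -/
import Mathlib

section
/- Let X be a compact Hausdorff space, Y a Hausdorff space, and f : X → Y a continuous map. Then f is quasi-open (the image under f of every nonempty open subset of X has nonempty interior in Y) if and only if f is skeletal (the preimage under f of every dense open subset of Y is dense in X). -/
/-!
Quasi-open implies skeletal: the image of a nonempty open set has an interior, which meets every
dense open subset of `Y`. Conversely, a nonempty open `U ⊆ X` contains a compact neighbourhood `K`
of one of its points; `f '' K` is closed, and skeletality forbids a closed set with empty interior
from having a preimage with nonempty interior, so `f '' K ⊆ f '' U` has nonempty interior.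
-/

open Set

section

variable {X Y : Type*} [TopologicalSpace X] [TopologicalSpace Y]

def IsQuasiOpenMap (f : X → Y) : Prop :=
  ∀ U : Set X, IsOpen U → U.Nonempty → (interior (f '' U)).Nonempty

def IsSkeletalMap (f : X → Y) : Prop :=
  ∀ D : Set Y, IsOpen D → Dense D → Dense (f ⁻¹' D)

theorem IsQuasiOpenMap.isSkeletalMap {f : X → Y} (hf : IsQuasiOpenMap f) : IsSkeletalMap f := by
  intro D _ hD
  refine dense_iff_inter_open.mpr fun U hU hUne => ?_
  obtain ⟨_, hyV, hyD⟩ := hD.inter_open_nonempty _ isOpen_interior (hf U hU hUne)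
  obtain ⟨x, hxU, rfl⟩ := interior_subset hyV
  exact ⟨x, hxU, hyD⟩

theorem IsSkeletalMap.interior_nonempty_of_interior_preimage_nonempty {f : X → Y}
    (hf : IsSkeletalMap f) {C : Set Y} (hC : IsClosed C) (h : (interior (f ⁻¹' C)).Nonempty) :
    (interior C).Nonempty := by
  contrapose! h
  have hdense : Dense (f ⁻¹' C)ᶜ :=
    hf _ hC.isOpen_compl (interior_eq_empty_iff_dense_compl.mp h)
  exact interior_eq_empty_iff_dense_compl.mpr hdense

theorem IsSkeletalMap.isQuasiOpenMap [LocallyCompactSpace X] [T2Space Y] {f : X → Y}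
    (hc : Continuous f) (hf : IsSkeletalMap f) : IsQuasiOpenMap f := by
  rintro U hU ⟨x, hxU⟩
  obtain ⟨K, hK, hxK, hKU⟩ := exists_compact_subset hU hxU
  have hfK : (interior (f '' K)).Nonempty :=
    hf.interior_nonempty_of_interior_preimage_nonempty (hK.image hc).isClosed
      ⟨x, interior_mono (subset_preimage_image f K) hxK⟩
  exact hfK.mono (interior_mono (image_mono hKU))

theorem isQuasiOpenMap_iff_isSkeletalMap [LocallyCompactSpace X] [T2Space Y] {f : X → Y}
    (hc : Continuous f) : IsQuasiOpenMap f ↔ IsSkeletalMap f :=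
  ⟨IsQuasiOpenMap.isSkeletalMap, IsSkeletalMap.isQuasiOpenMap hc⟩

end

/-- A continuous map between a compact Hausdorff space and a Hausdorff space is
quasi-open (images of nonempty opens have nonempty interior) iff it is skeletal
(preimages of dense open sets are dense). -/
theorem quasiOpen_iff_skeletal {X Y : Type*} [TopologicalSpace X] [TopologicalSpace Y]
    [CompactSpace X] [T2Space X] [T2Space Y] (f : X → Y) (hf : Continuous f) :
    (∀ U : Set X, IsOpen U → U.Nonempty → (interior (f '' U)).Nonempty) ↔
    (∀ D : Set Y, IsOpen D → Dense D → Dense (f ⁻¹' D)) :=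
  isQuasiOpenMap_iff_isSkeletalMap hf
end

section
/- Let S be an extremally disconnected compact Hausdorff space, W ⊆ S a dense subset, X a compact Hausdorff space, and h : W → X a continuous map (where W carries the subspace topology). Then there exists a unique continuous map H : S → X such that H w = h w for every w ∈ W. -/
/-!
The extension is the `Dense.extend` of `h`: it exists and is continuous as soon as `h` has a limit
along the trace on `W` of every neighbourhood filter of `S`. A cluster point of `h` there exists by
compactness of `X`; it is unique because two distinct cluster points would have disjoint
neighbourhoods whose preimages under `h` are disjoint relatively open subsets of `W`, and in an
extremally disconnected space such sets, `W` being dense, have disjoint closures, which would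
both contain the point.
-/

open Filter Set Topology

theorem Dense.disjoint_closure_image_of_disjoint_isOpen {S : Type*} [TopologicalSpace S]
    [ExtremallyDisconnected S] {W : Set S} (hW : Dense W) {U V : Set W} (hUV : Disjoint U V)
    (hU : IsOpen U) (hV : IsOpen V) :
    Disjoint (closure (((↑) : W → S) '' U)) (closure ((↑) '' V)) := by
  obtain ⟨O₁, hO₁, rfl⟩ := isOpen_induced_iff.mp hU
  obtain ⟨O₂, hO₂, rfl⟩ := isOpen_induced_iff.mp hV
  have hO : Disjoint O₁ O₂ := by
    rw [disjoint_iff_inter_eq_empty, ← not_nonempty_iff_eq_empty]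
    rintro hne
    obtain ⟨w, ⟨hw₁, hw₂⟩, hwW⟩ := hW.inter_open_nonempty _ (hO₁.inter hO₂) hne
    exact hUV.le_bot (show (⟨w, hwW⟩ : W) ∈ _ ∩ _ from ⟨hw₁, hw₂⟩)
  exact (ExtremallyDisconnected.disjoint_closure_of_disjoint_isOpen hO hO₁ hO₂).mono
    (closure_mono (image_preimage_subset _ _)) (closure_mono (image_preimage_subset _ _))

theorem MapClusterPt.mem_closure_image_preimage {α S X : Type*} [TopologicalSpace S]
    [TopologicalSpace X] {e : α → S} {f : α → X} {s : S} {x : X}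
    (hx : MapClusterPt x (comap e (𝓝 s)) f) {V : Set X} (hV : V ∈ 𝓝 x) :
    s ∈ closure (e '' (f ⁻¹' V)) := by
  rw [mem_closure_iff_frequently]
  exact (frequently_comap.mp (mapClusterPt_iff_frequently.mp hx V hV)).mono
    fun _ ⟨a, hea, ha⟩ => ⟨a, ha, hea⟩

theorem Dense.eq_of_mapClusterPt_comap_nhds {S X : Type*} [TopologicalSpace S]
    [ExtremallyDisconnected S] [TopologicalSpace X] [T2Space X] {W : Set S} (hW : Dense W)
    {h : W → X} (hh : Continuous h) {s : S} {x y : X}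
    (hx : MapClusterPt x (comap (↑) (𝓝 s)) h) (hy : MapClusterPt y (comap (↑) (𝓝 s)) h) :
    x = y := by
  by_contra hne
  obtain ⟨V₁, V₂, hV₁, hV₂, hxV₁, hyV₂, hV⟩ := t2_separation hne
  exact (hW.disjoint_closure_image_of_disjoint_isOpen (hV.preimage h) (hV₁.preimage hh)
    (hV₂.preimage hh)).le_bot ⟨hx.mem_closure_image_preimage (hV₁.mem_nhds hxV₁),
      hy.mem_closure_image_preimage (hV₂.mem_nhds hyV₂)⟩

theorem Dense.exists_tendsto_comap_nhds {S X : Type*} [TopologicalSpace S]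
    [ExtremallyDisconnected S] [TopologicalSpace X] [CompactSpace X] [T2Space X] {W : Set S}
    (hW : Dense W) {h : W → X} (hh : Continuous h) (s : S) :
    ∃ c, Tendsto h (comap (↑) (𝓝 s)) (𝓝 c) := by
  have : NeBot (comap ((↑) : W → S) (𝓝 s)) := hW.isDenseInducing_val.comap_nhds_neBot s
  obtain ⟨c, hc⟩ := exists_clusterPt_of_compactSpace (map h (comap (↑) (𝓝 s)))
  exact ⟨c, tendsto_nhds_of_unique_mapClusterPt fun x hx =>
    hW.eq_of_mapClusterPt_comap_nhds hh hx hc⟩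

theorem unique_continuous_extension_of_dense_extremallyDisconnected_general
    {S X : Type*} [TopologicalSpace S]
    [ExtremallyDisconnected S] [TopologicalSpace X] [CompactSpace X] [T2Space X]
    (W : Set S) (hW : Dense W) (h : W → X) (hh : Continuous h) :
    ∃ H : S → X, (Continuous H ∧ ∀ w : W, H w = h w) ∧
      ∀ H' : S → X, Continuous H' → (∀ w : W, H' w = h w) → H' = H :=
  ⟨hW.extend h, ⟨hW.continuous_extend (hW.exists_tendsto_comap_nhds hh), hW.extend_eq hh⟩,
    fun _ hH' hH'W => (hW.extend_unique hH'W hH').symm⟩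

/-- A continuous map from a dense subset of an extremally disconnected compact
Hausdorff space into a compact Hausdorff space has a unique continuous extension. -/
theorem unique_continuous_extension_of_dense_extremallyDisconnected
    {S X : Type*} [TopologicalSpace S] [CompactSpace S] [T2Space S]
    [ExtremallyDisconnected S] [TopologicalSpace X] [CompactSpace X] [T2Space X]
    (W : Set S) (hW : Dense W) (h : W → X) (hh : Continuous h) :
    ∃ H : S → X, (Continuous H ∧ ∀ w : W, H w = h w) ∧
      ∀ H' : S → X, Continuous H' → (∀ w : W, H' w = h w) → H' = H :=
  unique_continuous_extension_of_dense_extremallyDisconnected_general W hW h hh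
end

section
/- Let S be an extremally disconnected compact Hausdorff space, W ⊆ S a dense subset, X a compact Hausdorff space, and h : W → X a continuous map (subspace topology on W) such that for every dense open set D ⊆ X, the preimage h⁻¹ D is dense in W. If H : S → X is a continuous map with H w = h w for every w ∈ W, then for every dense open set D ⊆ X, the preimage H⁻¹ D is dense in S (i.e. H is skeletal), and consequently for every nonempty open U ⊆ S the image H '' U has nonempty interior in X (i.e. H is quasi-open). -/
/-!
A dense open `D ⊆ X` pulls back under `h` to a dense subset of `W`, hence of `S`, and this
subset lies in `H⁻¹ D`. Quasi-openness then needs only that `H` is closed and `S` regular: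
for `V` open with `closure V ⊆ U`, if the closed set `H '' closure V` had empty interior, its
complement would be a dense open set whose preimage misses `V`.
-/

open Set Topology

def IsSkeletal {S X : Type*} [TopologicalSpace S] [TopologicalSpace X] (f : S → X) : Prop :=
  ∀ D : Set X, IsOpen D → Dense D → Dense (f ⁻¹' D)

def IsQuasiOpen {S X : Type*} [TopologicalSpace S] [TopologicalSpace X] (f : S → X) : Prop :=
  ∀ U : Set S, IsOpen U → U.Nonempty → (interior (f '' U)).Nonempty

section

variable {S X : Type*} [TopologicalSpace S] [TopologicalSpace X] {f : S → X}

theorem Dense.isSkeletal_of_isSkeletal_comp_val {W : Set S} (hW : Dense W)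
    (hf : IsSkeletal (f ∘ ((↑) : W → S))) : IsSkeletal f := by
  intro D hDo hDd
  have himg : Dense (((↑) : W → S) '' ((f ∘ (↑)) ⁻¹' D)) :=
    hW.denseRange_val.dense_image continuous_subtype_val (hf D hDo hDd)
  exact himg.mono (image_subset_iff.2 fun _ hw ↦ hw)

theorem IsSkeletal.interior_image_closure_nonempty (hf : IsSkeletal f) (hc : IsClosedMap f)
    {V : Set S} (hVo : IsOpen V) (hVne : V.Nonempty) : (interior (f '' closure V)).Nonempty := by
  rw [nonempty_iff_ne_empty, Ne, interior_eq_empty_iff_dense_compl]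
  intro hdense
  obtain ⟨y, hyV, hy⟩ :=
    (hf _ (hc _ isClosed_closure).isOpen_compl hdense).inter_open_nonempty V hVo hVne
  exact hy (mem_image_of_mem f (subset_closure hyV))

theorem IsSkeletal.isQuasiOpen [RegularSpace S] (hf : IsSkeletal f) (hc : IsClosedMap f) :
    IsQuasiOpen f := by
  rintro U hUo ⟨x, hxU⟩
  obtain ⟨V, ⟨hxV, hVo⟩, hVU⟩ := (hasBasis_opens_closure x).mem_iff.1 (hUo.mem_nhds hxU)
  exact (hf.interior_image_closure_nonempty hc hVo ⟨x, hxV⟩).mono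
    (interior_mono (image_mono hVU))

end

theorem extension_skeletal_and_quasiOpen_general
    {S X : Type*} [TopologicalSpace S] [CompactSpace S] [T2Space S]
    [TopologicalSpace X] [T2Space X]
    (W : Set S) (hW : Dense W) (h : W → X)
    (hsk : ∀ D : Set X, IsOpen D → Dense D → Dense (h ⁻¹' D))
    (H : S → X) (hH : Continuous H) (hHW : ∀ w : W, H w = h w) :
    (∀ D : Set X, IsOpen D → Dense D → Dense (H ⁻¹' D)) ∧
    (∀ U : Set S, IsOpen U → U.Nonempty → (interior (H '' U)).Nonempty) := by
  have hrestrict : H ∘ ((↑) : W → S) = h := funext hHW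
  have hskel : IsSkeletal H := hW.isSkeletal_of_isSkeletal_comp_val (hrestrict ▸ hsk)
  exact ⟨hskel, hskel.isQuasiOpen hH.isClosedMap⟩

/-- If a skeletal continuous map on a dense subset of an extremally disconnected
compact Hausdorff space extends continuously, then the extension is skeletal,
and consequently quasi-open. -/
theorem extension_skeletal_and_quasiOpen
    {S X : Type*} [TopologicalSpace S] [CompactSpace S] [T2Space S]
    [ExtremallyDisconnected S] [TopologicalSpace X] [CompactSpace X] [T2Space X]
    (W : Set S) (hW : Dense W) (h : W → X) (hh : Continuous h)
    (hsk : ∀ D : Set X, IsOpen D → Dense D → Dense (h ⁻¹' D))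
    (H : S → X) (hH : Continuous H) (hHW : ∀ w : W, H w = h w) :
    (∀ D : Set X, IsOpen D → Dense D → Dense (H ⁻¹' D)) ∧
    (∀ U : Set S, IsOpen U → U.Nonempty → (interior (H '' U)).Nonempty) :=
  extension_skeletal_and_quasiOpen_general W hW h hsk H hH hHW
end

section
/- Let U and V₁, …, Vₙ be extremally disconnected compact Hausdorff spaces, and let fᵢ : Vᵢ → U (for i = 1, …, n) be continuous maps whose images jointly cover U, i.e. ⋃ᵢ fᵢ '' Vᵢ = U. Then there exist closed subsets Wᵢ ⊆ Vᵢ such that: each Wᵢ with the subspace topology is an extremally disconnected (compact Hausdorff) space; for each i, the restriction of fᵢ to Wᵢ is an open map into U (the image under fᵢ of every relatively open subset of Wᵢ is open in U); and ⋃ᵢ fᵢ '' Wᵢ = U. -/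
/-!
By Gleason's theorem `U` is projective among compact Hausdorff spaces, so the joint map
`Σ i, V i → U` has a continuous section `s`. Take `W i` to be the part of `V i` hit by `s`.
On `W i` the map `f i` is inverted by `s`, which makes it an open embedding onto the open
set `s ⁻¹' (V i)`; hence `W i` is extremally disconnected along with `U`.
-/

open Function Set Topology

universe u v

theorem Topology.IsOpenEmbedding.extremallyDisconnected {X Y : Type*} [TopologicalSpace X]
    [TopologicalSpace Y] [ExtremallyDisconnected Y] {e : X → Y} (he : IsOpenEmbedding e) :
    ExtremallyDisconnected X where
  open_closure O hO := by
    rw [he.isInducing.closure_eq_preimage_closure_image]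
    exact (ExtremallyDisconnected.open_closure _ (he.isOpenMap O hO)).preimage he.continuous

theorem ExtremallyDisconnected.exists_continuous_leftInverse {A : Type u} {X : Type v}
    [TopologicalSpace A] [CompactSpace A] [T2Space A] [ExtremallyDisconnected A]
    [TopologicalSpace X] [CompactSpace X] [T2Space X] {g : X → A} (hg : Continuous g)
    (hsurj : Surjective g) : ∃ s : A → X, Continuous s ∧ LeftInverse g s := by
  -- `CompactT2.Projective` only lifts along maps between spaces of one universe.
  have : ExtremallyDisconnected (ULift.{v} A) :=
    extremallyDisconnected_of_homeo Homeomorph.ulift.symm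
  obtain ⟨h, h_cont, hh⟩ := CompactT2.ExtremallyDisconnected.projective (A := ULift.{v} A)
    (Y := ULift.{u} X) (Z := ULift.{v} A) (f := id) (g := ULift.up ∘ g ∘ ULift.down)
    continuous_id (continuous_uliftUp.comp (hg.comp continuous_uliftDown))
    (ULift.up_surjective.comp (hsurj.comp ULift.down_surjective))
  exact ⟨fun a ↦ (h ⟨a⟩).down, continuous_uliftDown.comp (h_cont.comp continuous_uliftUp),
    fun a ↦ congrArg ULift.down (congrFun hh ⟨a⟩)⟩

theorem isOpenEmbedding_domRestrict_preimage_range_of_leftInverse {Y X U : Type*}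
    [TopologicalSpace Y] [TopologicalSpace X] [TopologicalSpace U] {e : Y → X}
    (he : IsOpenEmbedding e) {g : X → U} (hg : Continuous g) {s : U → X} (hs : Continuous s)
    (hgs : LeftInverse g s) : IsOpenEmbedding ((e ⁻¹' range s).domRestrict (g ∘ e)) := by
  have section_eq : ∀ y ∈ e ⁻¹' range s, s (g (e y)) = e y := by
    rintro y ⟨u, hu⟩
    rw [← hu, hgs u]
  refine .of_continuous_injective_isOpenMap ((hg.comp he.continuous).comp continuous_subtype_val)
    (fun y y' hyy' ↦ Subtype.ext (he.injective ?_)) ?_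
  · rw [← section_eq y y.2, ← section_eq y' y'.2]
    exact congrArg s hyy'
  · intro O hO
    obtain ⟨O', hO', rfl⟩ := isOpen_induced_iff.mp hO
    suffices (e ⁻¹' range s).domRestrict (g ∘ e) '' (Subtype.val ⁻¹' O') = s ⁻¹' (e '' O') by
      rw [this]
      exact (he.isOpenMap O' hO').preimage hs
    ext u
    constructor
    · rintro ⟨y, hyO, rfl⟩
      exact ⟨y, hyO, (section_eq y y.2).symm⟩
    · rintro ⟨y, hyO, hy⟩
      exact ⟨⟨y, u, hy.symm⟩, hyO, (congrArg g hy).trans (hgs u)⟩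

theorem exists_closed_extremallyDisconnected_open_refinement_general
    {ι : Type*} [Finite ι]
    {U : Type*} [TopologicalSpace U] [CompactSpace U] [T2Space U]
    [ExtremallyDisconnected U]
    {V : ι → Type*} [∀ i, TopologicalSpace (V i)] [∀ i, CompactSpace (V i)]
    [∀ i, T2Space (V i)]
    (f : ∀ i, V i → U) (hf : ∀ i, Continuous (f i))
    (hcover : (⋃ i, Set.range (f i)) = Set.univ) :
    ∃ W : ∀ i, Set (V i),
      (∀ i, IsClosed (W i)) ∧
      (∀ i, ExtremallyDisconnected (W i)) ∧
      (∀ i, IsOpenMap ((W i).restrict (f i))) ∧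
      (⋃ i, f i '' W i) = Set.univ := by
  let g : (Σ i, V i) → U := fun p ↦ f p.1 p.2
  have hg_surj : Surjective g := fun u ↦ by
    obtain ⟨i, v, hv⟩ := iUnion_eq_univ_iff.mp hcover u
    exact ⟨⟨i, v⟩, hv⟩
  obtain ⟨s, hs, hgs⟩ :=
    ExtremallyDisconnected.exists_continuous_leftInverse (continuous_sigma hf) hg_surj
  have hW : ∀ i, IsOpenEmbedding ((Sigma.mk i ⁻¹' range s).domRestrict (f i)) := fun i ↦
    isOpenEmbedding_domRestrict_preimage_range_of_leftInverse .sigmaMk (continuous_sigma hf) hs hgs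
  refine ⟨fun i ↦ Sigma.mk i ⁻¹' range s, fun i ↦ ?_, fun i ↦ (hW i).extremallyDisconnected,
    fun i ↦ (hW i).isOpenMap, iUnion_eq_univ_iff.mpr fun u ↦ ⟨(s u).1, (s u).2, ?_, hgs u⟩⟩
  · exact (isCompact_range hs).isClosed.preimage continuous_sigmaMk
  · exact ⟨u, rfl⟩

/-- Given finitely many continuous maps from extremally disconnected compact
Hausdorff spaces whose images jointly cover an extremally disconnected compact
Hausdorff space `U`, there are closed subsets `Wᵢ ⊆ Vᵢ`, themselves extremally
disconnected, on which the maps restrict to open maps and whose images still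
jointly cover `U`. -/
theorem exists_closed_extremallyDisconnected_open_refinement
    {ι : Type*} [Finite ι]
    {U : Type*} [TopologicalSpace U] [CompactSpace U] [T2Space U]
    [ExtremallyDisconnected U]
    {V : ι → Type*} [∀ i, TopologicalSpace (V i)] [∀ i, CompactSpace (V i)]
    [∀ i, T2Space (V i)] [∀ i, ExtremallyDisconnected (V i)]
    (f : ∀ i, V i → U) (hf : ∀ i, Continuous (f i))
    (hcover : (⋃ i, Set.range (f i)) = Set.univ) :
    ∃ W : ∀ i, Set (V i),
      (∀ i, IsClosed (W i)) ∧
      (∀ i, ExtremallyDisconnected (W i)) ∧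
      (∀ i, IsOpenMap ((W i).restrict (f i))) ∧
      (⋃ i, f i '' W i) = Set.univ :=
  exists_closed_extremallyDisconnected_open_refinement_general f hf hcover
end

section
/- Let I be a type, F ⊆ I a finite subset, and π : (I → ℤ) →+ ℤ a homomorphism of additive groups from the full product group ∏_{i ∈ I} ℤ (with pointwise addition) to ℤ. Suppose that for all uniformly bounded functions f, g : I → ℤ (i.e. for each of f and g there exists n ∈ ℕ with |f i| ≤ n for all i, respectively |g i| ≤ n for all i) satisfying f i = g i for all i ∈ F, one has π f = π g. Then for all functions f, g : I → ℤ (not necessarily bounded) satisfying f i = g i for all i ∈ F, one has π f = π g; that is, π factors through the restriction map to ∏_{i ∈ F} ℤ. -/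
/-!
Let `h` vanish on `F` and put `m = |π h| + 1`. Splitting `h = h % m + m • (h / m)` pointwise,
the remainder `h % m` is bounded and still vanishes on `F`, so `π (h % m) = π 0 = 0`. Hence
`m ∣ π h`, and since `|π h| < m` this forces `π h = 0`.
-/

theorem Int.exists_abs_emod_le {I : Type*} (h : I → ℤ) {m : ℤ} (hm : 0 < m) :
    ∃ n : ℕ, ∀ i, |h i % m| ≤ (n : ℤ) :=
  ⟨m.toNat, fun i => by
    rw [abs_of_nonneg (Int.emod_nonneg _ hm.ne'), Int.toNat_of_nonneg hm.le]
    exact (Int.emod_lt_of_pos _ hm).le⟩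

namespace AddMonoidHom

variable {I : Type*} (π : (I → ℤ) →+ ℤ)

theorem dvd_map_sub_map_emod (h : I → ℤ) (m : ℤ) : m ∣ π h - π (fun i => h i % m) := by
  have hsplit : h - (fun i => h i % m) = m • fun i => h i / m := by
    funext i
    simp only [Pi.sub_apply, Pi.smul_apply, smul_eq_mul]
    rw [sub_eq_iff_eq_add', Int.emod_add_mul_ediv]
  rw [← map_sub, hsplit, map_zsmul, smul_eq_mul]
  exact dvd_mul_right _ _

theorem map_eq_zero_of_map_emod_eq_zero (h : I → ℤ)
    (hmod : ∀ m : ℤ, 0 < m → π (fun i => h i % m) = 0) : π h = 0 := by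
  set m := |π h| + 1
  have hm : 0 < m := by positivity
  have hdvd : m ∣ π h := by simpa [hmod m hm] using π.dvd_map_sub_map_emod h m
  exact Int.eq_zero_of_abs_lt_dvd hdvd (lt_add_one _)

end AddMonoidHom

theorem addHom_factors_through_finset_of_factors_on_bounded_general
    {I : Type*} (F : Set I) (π : (I → ℤ) →+ ℤ)
    (hbdd : ∀ f g : I → ℤ, (∃ n : ℕ, ∀ i, |f i| ≤ (n : ℤ)) →
      (∃ n : ℕ, ∀ i, |g i| ≤ (n : ℤ)) → (∀ i ∈ F, f i = g i) → π f = π g) :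
    ∀ f g : I → ℤ, (∀ i ∈ F, f i = g i) → π f = π g := by
  intro f g hfg
  rw [← sub_eq_zero, ← map_sub]
  refine π.map_eq_zero_of_map_emod_eq_zero _ fun m hm => ?_
  have hvanish : ∀ i ∈ F, (f - g) i % m = (0 : I → ℤ) i := fun i hi => by
    simp [hfg i hi]
  rw [hbdd _ 0 (Int.exists_abs_emod_le _ hm) ⟨0, by simp⟩ hvanish, map_zero]

/-- If a homomorphism `π : (∏_I ℤ) →+ ℤ` factors through the coordinates in a
finite set `F` on all uniformly bounded functions, then it factors through the
coordinates in `F` on all functions. -/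
theorem addHom_factors_through_finset_of_factors_on_bounded
    {I : Type*} (F : Set I) (hF : F.Finite) (π : (I → ℤ) →+ ℤ)
    (hbdd : ∀ f g : I → ℤ, (∃ n : ℕ, ∀ i, |f i| ≤ (n : ℤ)) →
      (∃ n : ℕ, ∀ i, |g i| ≤ (n : ℤ)) → (∀ i ∈ F, f i = g i) → π f = π g) :
    ∀ f g : I → ℤ, (∀ i ∈ F, f i = g i) → π f = π g :=
  addHom_factors_through_finset_of_factors_on_bounded_general F π hbdd
end
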